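/- arXiv:2311.10180 — 3 statements merged into one kernel-verified Lean document; each statement's English description precedes it below -/
import Mathlib

section
/- The right composition of packed words satisfies the parallel (disjoint) associativity axiom: for a packed word u of length n, packed words v of length m and w of length p, and indices 1 ≤ i < j ≤ n, one has (u ∘→_j w) ∘→_i v = (u ∘→_i v) ∘→_{j+m−1} w. -/
/-- Increment by `α` every letter strictly greater than `β`. -/
def Inc (α β : ℕ) (u : List ℕ) : List ℕ := u.map fun a => if β < a then a + α else a

/-- Maximal letter of a word. -/
def maxLetter (v : List ℕ) : ℕ := v.foldr max 0

/-- A packed word whose letter set is exactly `{1, …, k}`. -/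
def IsPackedOn (k : ℕ) (w : List ℕ) : Prop := w.toFinset = Finset.Icc 1 k

/-- A packed word. -/
def IsPacked (w : List ℕ) : Prop := ∃ k, IsPackedOn k w

/-- A permutation of `{1, …, n}` identified with the word `σ(1) ⋯ σ(n)`. -/
def IsPermWord (n : ℕ) (σ : List ℕ) : Prop :=
  σ.length = n ∧ σ.toFinset = Finset.Icc 1 n

/-- `σ` is the standardization of `w`: a permutation word of `{1, …, n}` with the same
inversions as `w` (0-based indexing). -/
def IsStdOf (w σ : List ℕ) : Prop :=
  IsPermWord w.length σ ∧
    ∀ i j : ℕ, i < j → j < w.length →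
      (w.getD j 0 < w.getD i 0 ↔ σ.getD j 0 < σ.getD i 0)

/-- The weakly increasing rearrangement (composition type) of a word. -/
def chi (w : List ℕ) : List ℕ := List.insertionSort (· ≤ ·) w

/-- Right composition `u ∘→_i v` of packed words (`i` is 1-based). -/
def rightComp (u : List ℕ) (i : ℕ) (v : List ℕ) : List ℕ :=
  Inc (maxLetter v - 1) (u.getD (i - 1) 0) (u.take (i - 1))
    ++ Inc (u.getD (i - 1) 0 - 1) 0 v
    ++ Inc (maxLetter v - 1) (u.getD (i - 1) 0 - 1) (u.drop i)

/-- Left composition `u ∘←_i v` of packed words: replace in `Inc (m-1) i u` every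
occurrence of the letter `i` by the word `Inc (i-1) 0 v`, where `m` is the maximal
letter of `v`. -/
def leftComp (u : List ℕ) (i : ℕ) (v : List ℕ) : List ℕ :=
  u.flatMap fun a =>
    if a = i then Inc (i - 1) 0 v else [if i < a then a + (maxLetter v - 1) else a]

/-- Block composition `B_i(α, β)` of permutation words (`i` is 1-based, `β` a permutation
of `{1, …, m}` with `m = β.length`). -/
def blockComp (α : List ℕ) (i : ℕ) (β : List ℕ) : List ℕ :=
  Inc (β.length - 1) (α.getD (i - 1) 0) (α.take (i - 1))
    ++ Inc (α.getD (i - 1) 0 - 1) 0 β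
    ++ Inc (β.length - 1) (α.getD (i - 1) 0 - 1) (α.drop i)

/-- The inverse of a permutation word. -/
def invWord (σ : List ℕ) : List ℕ :=
  (List.range σ.length).map fun p => σ.idxOf (p + 1) + 1

/-- The right action of a permutation word `σ` of `{1, …, n}` on a packed word with
letter set `{1, …, n}`: the `p`-th letter of `u · σ` is `σ⁻¹(u(p))`. -/
def permAct (u σ : List ℕ) : List ℕ := u.map fun a => (invWord σ).getD (a - 1) 0

/-- The identity permutation word of `{1, …, m}`. -/
def idWord (m : ℕ) : List ℕ := (List.range m).map (· + 1)

/-- `First k u`: keep only the `k` leftmost occurrences of each letter of `u`. -/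
def First (k : ℕ) (u : List ℕ) : List ℕ :=
  (List.range u.length).filterMap fun p =>
    if (u.take p).count (u.getD p 0) < k then some (u.getD p 0) else none

/-!
Cut `u = p · a · q · b · r` at the letters `a = u(i)` and `b = u(j)`. Both sides are then the
concatenation of five blocks, coming from `p`, `v`, `q`, `w`, `r`, each incremented twice. Two
increments commute once the threshold of the outer one is shifted,
`Inc σ α ∘ Inc τ β = Inc τ (β + σ) ∘ Inc σ α` for `α ≤ β`, and an increment whose threshold lies
above all letters of a block fixes it; according as `a ≤ b` or `b < a`, these identities match the
blocks pairwise.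
-/

theorem List.exists_eq_append_cons_of_lt_length {α : Type*} {l : List α} {i : ℕ}
    (h : i < l.length) : ∃ p a q, l = p ++ a :: q ∧ p.length = i :=
  ⟨l.take i, l[i], l.drop (i + 1), by simp, by simp; omega⟩

theorem IsPacked.pos_of_mem {u : List ℕ} (hu : IsPacked u) {x : ℕ} (hx : x ∈ u) : 0 < x := by
  obtain ⟨k, hk⟩ := hu
  have hx' : x ∈ Finset.Icc 1 k := hk ▸ List.mem_toFinset.2 hx
  exact (Finset.mem_Icc.1 hx').1

def incLetter (α β x : ℕ) : ℕ := if β < x then x + α else x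

theorem Inc_eq_map (α β : ℕ) (l : List ℕ) : Inc α β l = l.map (incLetter α β) := rfl

@[simp]
theorem length_Inc (α β : ℕ) (l : List ℕ) : (Inc α β l).length = l.length :=
  List.length_map _

theorem Inc_append (α β : ℕ) (l₁ l₂ : List ℕ) :
    Inc α β (l₁ ++ l₂) = Inc α β l₁ ++ Inc α β l₂ :=
  List.map_append

theorem Inc_cons (α β a : ℕ) (l : List ℕ) : Inc α β (a :: l) = incLetter α β a :: Inc α β l :=
  rfl

theorem incLetter_incLetter_of_le {α β : ℕ} (σ τ : ℕ) (h : α ≤ β) (x : ℕ) :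
    incLetter σ α (incLetter τ β x) = incLetter τ (β + σ) (incLetter σ α x) := by
  unfold incLetter; split_ifs <;> omega

theorem incLetter_incLetter_zero_of_le {α β : ℕ} (σ : ℕ) (h : α ≤ β) (x : ℕ) :
    incLetter σ α (incLetter β 0 x) = incLetter (β + σ) 0 x := by
  unfold incLetter; split_ifs <;> omega

theorem Inc_Inc_of_le {α β : ℕ} (σ τ : ℕ) (h : α ≤ β) (l : List ℕ) :
    Inc σ α (Inc τ β l) = Inc τ (β + σ) (Inc σ α l) := by
  simp only [Inc_eq_map, List.map_map]
  exact List.map_congr_left fun x _ => incLetter_incLetter_of_le σ τ h x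

theorem Inc_Inc_zero_of_le {α β : ℕ} (σ : ℕ) (h : α ≤ β) (l : List ℕ) :
    Inc σ α (Inc β 0 l) = Inc (β + σ) 0 l := by
  simp only [Inc_eq_map, List.map_map]
  exact List.map_congr_left fun x _ => incLetter_incLetter_zero_of_le σ h x

theorem le_maxLetter_of_mem {x : ℕ} {l : List ℕ} (h : x ∈ l) : x ≤ maxLetter l := by
  induction l with
  | nil => cases h
  | cons a l ih =>
    rcases List.mem_cons.1 h with rfl | h
    · exact le_max_left _ _
    · exact (ih h).trans (le_max_right _ _)

theorem Inc_Inc_zero_of_maxLetter_add_le {β γ : ℕ} (α : ℕ) {l : List ℕ}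
    (h : maxLetter l + γ ≤ β) : Inc α β (Inc γ 0 l) = Inc γ 0 l := by
  simp only [Inc_eq_map, List.map_map]
  refine List.map_congr_left fun x hx => ?_
  have hx' := le_maxLetter_of_mem hx
  simp only [Function.comp_apply, incLetter]
  split_ifs <;> omega

theorem rightComp_append_cons (p q v : List ℕ) (a : ℕ) {i : ℕ} (hi : i = p.length + 1) :
    rightComp (p ++ a :: q) i v =
      Inc (maxLetter v - 1) a p ++ Inc (a - 1) 0 v ++ Inc (maxLetter v - 1) (a - 1) q := by
  subst hi
  simp [rightComp, List.getD_eq_getElem?_getD, List.drop_append, List.drop_eq_nil_of_le]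

theorem rightComp_append_cons_parallel_assoc (p q r v w : List ℕ) (a : ℕ) {b : ℕ} (hb : 0 < b) :
    rightComp (rightComp ((p ++ a :: q) ++ b :: r) (p.length + q.length + 2) w) (p.length + 1) v
      = rightComp (rightComp ((p ++ a :: q) ++ b :: r) (p.length + 1) v)
          (p.length + v.length + q.length + 1) w := by
  rw [rightComp_append_cons _ _ _ _ (by simp; omega)]
  simp only [Inc_append, Inc_cons, List.append_assoc, List.cons_append]
  rw [rightComp_append_cons _ _ _ _ (by simp), rightComp_append_cons _ _ _ _ rfl]
  simp only [Inc_append, Inc_cons, ← List.append_assoc]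
  rw [rightComp_append_cons _ _ _ _ (by simp; omega)]
  simp only [Inc_append, List.append_assoc]
  set σ := maxLetter v - 1
  set τ := maxLetter w - 1
  obtain hab | hba := le_or_gt a b
  · have ha' : incLetter τ b a = a := if_neg hab.not_gt
    have hb' : incLetter σ (a - 1) b = b + σ := if_pos (by omega)
    rw [ha', hb', show b + σ - 1 = b - 1 + σ by omega,
      Inc_Inc_of_le σ τ hab, Inc_Inc_zero_of_maxLetter_add_le τ (by omega),
      Inc_Inc_of_le σ τ (by omega : a - 1 ≤ b), Inc_Inc_zero_of_le σ (by omega : a - 1 ≤ b - 1),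
      Inc_Inc_of_le σ τ (by omega : a - 1 ≤ b - 1)]
  · have ha' : incLetter τ b a = a + τ := if_pos hba
    have hb' : incLetter σ (a - 1) b = b := if_neg (by omega)
    rw [ha', hb', show a + τ - 1 = a - 1 + τ by omega,
      Inc_Inc_of_le τ σ hba.le, Inc_Inc_zero_of_le τ (by omega : b ≤ a - 1),
      Inc_Inc_of_le τ σ (by omega : b ≤ a - 1),
      Inc_Inc_zero_of_maxLetter_add_le σ (by omega : maxLetter w + (b - 1) ≤ a - 1 + τ),
      Inc_Inc_of_le τ σ (by omega : b - 1 ≤ a - 1)]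

theorem rightComp_parallel_assoc_general (u v w : List ℕ)
    (hu : IsPacked u) (i j : ℕ)
    (h1 : 1 ≤ i) (hij : i < j) (hj : j ≤ u.length) :
    rightComp (rightComp u j w) i v
      = rightComp (rightComp u i v) (j + v.length - 1) w := by
  obtain ⟨s, b, r, rfl, hs⟩ :=
    List.exists_eq_append_cons_of_lt_length (l := u) (i := j - 1) (by omega)
  obtain ⟨p, a, q, rfl, hp⟩ :=
    List.exists_eq_append_cons_of_lt_length (l := s) (i := i - 1) (by omega)
  have hb : 0 < b := hu.pos_of_mem (by simp)
  simp only [List.length_append, List.length_cons] at hs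
  obtain rfl : i = p.length + 1 := by omega
  obtain rfl : j = p.length + q.length + 2 := by omega
  rw [show p.length + q.length + 2 + v.length - 1 = p.length + v.length + q.length + 1 by omega]
  exact rightComp_append_cons_parallel_assoc p q r v w a hb

/-- Parallel (disjoint) associativity for the right composition of packed words. -/
theorem rightComp_parallel_assoc (u v w : List ℕ)
    (hu : IsPacked u) (hv : IsPacked v) (hw : IsPacked w) (i j : ℕ)
    (h1 : 1 ≤ i) (hij : i < j) (hj : j ≤ u.length)
    (hv1 : 1 ≤ v.length) (hw1 : 1 ≤ w.length) :
    rightComp (rightComp u j w) i v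
      = rightComp (rightComp u i v) (j + v.length - 1) w :=
  rightComp_parallel_assoc_general u v w hu i j h1 hij hj
end

section
/- Standardization intertwines the right composition of packed words with the block composition of permutations: for every packed word u of length n, every i ∈ {1,…,n}, and every packed word v, one has st(u ∘→_i v) = B_i(st(u), st(v)). -/
/-!
Standardizations are unique, so it suffices to show that `B_i(st u, st v)` is a permutation
with the same inversions as `u ∘→_i v`. Both words have the shape `substAt`. In such a word
two positions compare as in the inner word when both lie in the block, and otherwise as the
outer word does at the positions they come from: the threshold `w(i)` before the block and
`w(i) - 1` after it keep the copies of the letter `w(i)` left of the block at most its letters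
and push those right of it above them, which is how standardization breaks ties.
-/

def bump (α β a : ℕ) : ℕ := if β < a then a + α else a

theorem Inc_eq_map_s7 (α β : ℕ) (u : List ℕ) : Inc α β u = u.map (bump α β) := rfl

theorem Inc_length (α β : ℕ) (u : List ℕ) : (Inc α β u).length = u.length :=
  List.length_map _

theorem Inc_getD (α β : ℕ) {u : List ℕ} {p : ℕ} (hp : p < u.length) :
    (Inc α β u).getD p 0 = bump α β (u.getD p 0) := by
  rw [Inc_eq_map_s7, List.getD_eq_getElem _ _ (by simpa using hp), List.getElem_map,
    List.getD_eq_getElem _ _ hp]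

theorem le_maxLetter {x : ℕ} {v : List ℕ} (h : x ∈ v) : x ≤ maxLetter v :=
  List.le_max_of_le' 0 h le_rfl

theorem IsPacked.one_le {w : List ℕ} (h : IsPacked w) {x : ℕ} (hx : x ∈ w) : 1 ≤ x := by
  obtain ⟨k, hk⟩ := h
  have := List.mem_toFinset.mpr hx
  rw [hk, Finset.mem_Icc] at this
  exact this.1

theorem List.getD_mem_of_lt {w : List ℕ} {p : ℕ} (hp : p < w.length) : w.getD p 0 ∈ w := by
  rw [List.getD_eq_getElem _ _ hp]
  exact List.getElem_mem _

def SameInversions (w σ : List ℕ) : Prop :=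
  ∀ i j : ℕ, i < j → j < w.length → (w.getD j 0 < w.getD i 0 ↔ σ.getD j 0 < σ.getD i 0)

namespace IsPermWord

variable {n : ℕ} {σ : List ℕ}

theorem mem_iff (h : IsPermWord n σ) {x : ℕ} : x ∈ σ ↔ 1 ≤ x ∧ x ≤ n := by
  rw [← List.mem_toFinset, h.2, Finset.mem_Icc]

theorem nodup (h : IsPermWord n σ) : σ.Nodup := by
  have hcard : σ.toFinset.card = σ.length := by rw [h.2, Nat.card_Icc, h.1]; omega
  exact Multiset.toFinset_card_eq_card_iff_nodup.mp hcard

theorem getD_mem (h : IsPermWord n σ) {q : ℕ} (hq : q < n) : 1 ≤ σ.getD q 0 ∧ σ.getD q 0 ≤ n :=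
  h.mem_iff.mp (List.getD_mem_of_lt (h.1 ▸ hq))

theorem exists_getD_eq (h : IsPermWord n σ) {x : ℕ} (hx₁ : 1 ≤ x) (hx₂ : x ≤ n) :
    ∃ q < n, σ.getD q 0 = x := by
  obtain ⟨q, hq, rfl⟩ := List.mem_iff_getElem.mp (h.mem_iff.mpr ⟨hx₁, hx₂⟩)
  exact ⟨q, h.1 ▸ hq, List.getD_eq_getElem _ _ hq⟩

theorem getD_inj (h : IsPermWord n σ) {q q' : ℕ} (hq : q < n) (hq' : q' < n) :
    σ.getD q 0 = σ.getD q' 0 ↔ q = q' := by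
  rw [List.getD_eq_getElem _ _ (h.1 ▸ hq), List.getD_eq_getElem _ _ (h.1 ▸ hq')]
  exact h.nodup.getElem_inj_iff

theorem getD_eq_card_lt (h : IsPermWord n σ) {p : ℕ} (hp : p < n) :
    σ.getD p 0 = ((Finset.range n).filter fun q => σ.getD q 0 < σ.getD p 0).card + 1 := by
  set S := (Finset.range n).filter fun q => σ.getD q 0 < σ.getD p 0
  have himage : S.image (σ.getD · 0) = Finset.Ico 1 (σ.getD p 0) := by
    ext y
    simp only [S, Finset.mem_image, Finset.mem_filter, Finset.mem_range, Finset.mem_Ico]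
    constructor
    · rintro ⟨q, ⟨hq, hlt⟩, rfl⟩
      exact ⟨(h.getD_mem hq).1, hlt⟩
    · rintro ⟨hy₁, hy₂⟩
      obtain ⟨q, hq, rfl⟩ := h.exists_getD_eq hy₁ (hy₂.le.trans (h.getD_mem hp).2)
      exact ⟨q, ⟨hq, hy₂⟩, rfl⟩
  have hinj : Set.InjOn (σ.getD · 0) S := fun q hq q' hq' he => by
    simp only [S, Finset.coe_filter, Finset.mem_range] at hq hq'
    exact (h.getD_inj hq.1 hq'.1).mp he
  have hcard := Finset.card_image_of_injOn hinj
  rw [himage, Nat.card_Ico] at hcard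
  have := (h.getD_mem hp).1
  omega

theorem ext_of_lt_iff {σ' : List ℕ} (h : IsPermWord n σ) (h' : IsPermWord n σ')
    (hlt : ∀ p q, p < n → q < n → (σ.getD q 0 < σ.getD p 0 ↔ σ'.getD q 0 < σ'.getD p 0)) :
    σ = σ' := by
  apply List.ext_getElem (h.1.trans h'.1.symm)
  intro p hp hp'
  have hpn : p < n := h.1 ▸ hp
  rw [← List.getD_eq_getElem _ 0 hp, ← List.getD_eq_getElem _ 0 hp',
    h.getD_eq_card_lt hpn, h'.getD_eq_card_lt hpn]
  congr 2
  exact Finset.filter_congr fun q hq => hlt p q hpn (Finset.mem_range.mp hq)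

theorem lt_iff_not_lt (h : IsPermWord n σ) {p q : ℕ} (hp : p < n) (hq : q < n) (hpq : p ≠ q) :
    σ.getD q 0 < σ.getD p 0 ↔ ¬ σ.getD p 0 < σ.getD q 0 := by
  have := mt (h.getD_inj hp hq).mp hpq
  omega

end IsPermWord

theorem IsStdOf.sameInversions {w σ : List ℕ} (h : IsStdOf w σ) : SameInversions w σ := h.2

theorem IsStdOf.unique {w σ σ' : List ℕ} (h : IsStdOf w σ) (h' : IsStdOf w σ') : σ = σ' := by
  refine h.1.ext_of_lt_iff h'.1 fun p q hp hq => ?_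
  rcases lt_trichotomy p q with hpq | rfl | hqp
  · exact (h.sameInversions p q hpq hq).symm.trans (h'.sameInversions p q hpq hq)
  · exact iff_of_false (lt_irrefl _) (lt_irrefl _)
  · rw [h.1.lt_iff_not_lt hp hq hqp.ne', h'.1.lt_iff_not_lt hp hq hqp.ne',
      ← h.sameInversions q p hqp hp, ← h'.sameInversions q p hqp hp]

/-- The letter of `w` at the (1-based) position `i` is replaced by the block `z`, the letters
around it being shifted by `c`. -/
def substAt (w : List ℕ) (i c : ℕ) (z : List ℕ) : List ℕ :=
  Inc c (w.getD (i - 1) 0) (w.take (i - 1)) ++ Inc (w.getD (i - 1) 0 - 1) 0 z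
    ++ Inc c (w.getD (i - 1) 0 - 1) (w.drop i)

theorem rightComp_eq_substAt (u : List ℕ) (i : ℕ) (v : List ℕ) :
    rightComp u i v = substAt u i (maxLetter v - 1) v := rfl

theorem blockComp_eq_substAt (α : List ℕ) (i : ℕ) (β : List ℕ) :
    blockComp α i β = substAt α i (β.length - 1) β := rfl

/-- The position of `w` from which position `j` of `substAt w i c z` originates, when
`z` has length `m`. -/
def srcPos (i m j : ℕ) : ℕ := if j < i - 1 then j else if j < i - 1 + m then i - 1 else j - m + 1

section substAt

variable {w z : List ℕ} {i c : ℕ}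

theorem substAt_length (hi : 1 ≤ i) (hin : i ≤ w.length) :
    (substAt w i c z).length = w.length + z.length - 1 := by
  simp only [substAt, List.length_append, Inc_length, List.length_take, List.length_drop]
  omega

theorem substAt_getD (hi : 1 ≤ i) (hin : i ≤ w.length) {j : ℕ}
    (hj : j < w.length + z.length - 1) :
    (substAt w i c z).getD j 0 =
      if j < i - 1 then bump c (w.getD (i - 1) 0) (w.getD j 0)
      else if j < i - 1 + z.length then bump (w.getD (i - 1) 0 - 1) 0 (z.getD (j - (i - 1)) 0)
      else bump c (w.getD (i - 1) 0 - 1) (w.getD (j - z.length + 1) 0) := by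
  have hpre : (Inc c (w.getD (i - 1) 0) (w.take (i - 1))).length = i - 1 := by
    rw [Inc_length, List.length_take]; omega
  rw [substAt, List.append_assoc]
  split_ifs with h₁ h₂
  · rw [List.getD_append _ _ _ _ (by omega), Inc_getD _ _ (by simp; omega)]
    simp [List.getD_eq_getElem?_getD, h₁]
  · rw [List.getD_append_right _ _ _ _ (by omega), hpre,
      List.getD_append _ _ _ _ (by rw [Inc_length]; omega), Inc_getD _ _ (by omega)]
  · rw [List.getD_append_right _ _ _ _ (by omega), hpre,
      List.getD_append_right _ _ _ _ (by rw [Inc_length]; omega), Inc_length,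
      Inc_getD _ _ (by simp; omega)]
    simp only [List.getD_eq_getElem?_getD, List.getElem?_drop]
    congr 3
    omega

theorem substAt_getD_lt_getD_iff (hi : 1 ≤ i) (hin : i ≤ w.length) (ht : 1 ≤ w.getD (i - 1) 0)
    (hz : ∀ y ∈ z, 1 ≤ y ∧ y ≤ c + 1) {j₁ j₂ : ℕ} (h₁₂ : j₁ < j₂)
    (hj₂ : j₂ < w.length + z.length - 1) :
    (substAt w i c z).getD j₂ 0 < (substAt w i c z).getD j₁ 0 ↔
      if i - 1 ≤ j₁ ∧ j₂ < i - 1 + z.length then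
        z.getD (j₂ - (i - 1)) 0 < z.getD (j₁ - (i - 1)) 0
      else w.getD (srcPos i z.length j₂) 0 < w.getD (srcPos i z.length j₁) 0 := by
  have hzj : ∀ j, i - 1 ≤ j → j < i - 1 + z.length →
      1 ≤ z.getD (j - (i - 1)) 0 ∧ z.getD (j - (i - 1)) 0 ≤ c + 1 :=
    fun j h h' => hz _ (List.getD_mem_of_lt (by omega))
  have hz₁ := hzj j₁
  have hz₂ := hzj j₂
  rw [substAt_getD hi hin hj₂, substAt_getD hi hin (j := j₁) (by omega)]
  simp only [srcPos, bump]
  split_ifs <;> omega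

end substAt

theorem srcPos_lt_srcPos {i m j₁ j₂ : ℕ} (h₁₂ : j₁ < j₂)
    (hinner : ¬(i - 1 ≤ j₁ ∧ j₂ < i - 1 + m)) : srcPos i m j₁ < srcPos i m j₂ := by
  unfold srcPos
  split_ifs <;> omega

theorem srcPos_lt {i m n j : ℕ} (hi : 1 ≤ i) (hin : i ≤ n) (hj : j < n + m - 1) :
    srcPos i m j < n := by
  unfold srcPos
  split_ifs <;> omega

theorem SameInversions.substAt {w σ z τ : List ℕ} {i c d : ℕ} (hw : SameInversions w σ)
    (hz : SameInversions z τ) (hσlen : σ.length = w.length) (hτlen : τ.length = z.length)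
    (hi : 1 ≤ i) (hin : i ≤ w.length) (hwi : 1 ≤ w.getD (i - 1) 0) (hσi : 1 ≤ σ.getD (i - 1) 0)
    (hzc : ∀ y ∈ z, 1 ≤ y ∧ y ≤ c + 1) (hτd : ∀ y ∈ τ, 1 ≤ y ∧ y ≤ d + 1) :
    SameInversions (substAt w i c z) (substAt σ i d τ) := by
  intro j₁ j₂ h₁₂ hj₂
  rw [substAt_length hi hin] at hj₂
  rw [substAt_getD_lt_getD_iff hi hin hwi hzc h₁₂ hj₂,
    substAt_getD_lt_getD_iff hi (hσlen ▸ hin) hσi hτd h₁₂ (by omega), hτlen]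
  split_ifs with hinner
  · exact hz _ _ (by omega) (by omega)
  · exact hw _ _ (srcPos_lt_srcPos h₁₂ hinner) (srcPos_lt hi hin hj₂)

theorem IsPermWord.exists_substAt_getD_eq {n m i : ℕ} {σ τ : List ℕ} (hσ : IsPermWord n σ)
    (hτ : IsPermWord m τ) (hi : 1 ≤ i) (hin : i ≤ n) (hm : 1 ≤ m) {x : ℕ} (hx₁ : 1 ≤ x)
    (hx₂ : x ≤ n + m - 1) : ∃ j < n + m - 1, (substAt σ i (m - 1) τ).getD j 0 = x := by
  have hb := hσ.getD_mem (q := i - 1) (by omega)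
  have hσlen := hσ.1
  have hτlen := hτ.1
  generalize hbdef : σ.getD (i - 1) 0 = b at hb
  by_cases hinner : b ≤ x ∧ x < b + m
  · obtain ⟨r, hr, hτr⟩ := hτ.exists_getD_eq (x := x - b + 1) (by omega) (by omega)
    refine ⟨i - 1 + r, by omega, ?_⟩
    rw [substAt_getD hi (hσlen ▸ hin) (by omega), hbdef, hτlen, if_neg (by omega),
      if_pos (by omega), show i - 1 + r - (i - 1) = r by omega, hτr, bump, if_pos (by omega)]
    omega
  · obtain ⟨q, hq, hσq⟩ :=
      hσ.exists_getD_eq (x := if x < b then x else x - m + 1) (by split_ifs <;> omega)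
        (by split_ifs <;> omega)
    have hqi : q ≠ i - 1 := by
      rintro rfl
      split_ifs at hσq <;> omega
    have hσq' : x < b ∧ σ.getD q 0 = x ∨ b + m ≤ x ∧ σ.getD q 0 = x - m + 1 := by
      split_ifs at hσq <;> omega
    refine ⟨if q < i - 1 then q else q + m - 1, by split_ifs <;> omega, ?_⟩
    rw [substAt_getD hi (hσlen ▸ hin) (by split_ifs <;> omega), hbdef, hτlen]
    by_cases hqlt : q < i - 1
    · simp only [if_pos hqlt, bump]
      split_ifs <;> omega
    · simp only [if_neg hqlt, if_neg (show ¬(q + m - 1 < i - 1) by omega),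
        if_neg (show ¬(q + m - 1 < i - 1 + m) by omega),
        show q + m - 1 - m + 1 = q by omega, bump]
      split_ifs <;> omega

theorem isPermWord_blockComp {n m i : ℕ} {σ τ : List ℕ} (hσ : IsPermWord n σ)
    (hτ : IsPermWord m τ) (hi : 1 ≤ i) (hin : i ≤ n) (hm : 1 ≤ m) :
    IsPermWord (n + m - 1) (blockComp σ i τ) := by
  have hlen : (blockComp σ i τ).length = n + m - 1 := by
    rw [blockComp_eq_substAt, substAt_length hi (hσ.1 ▸ hin), hσ.1, hτ.1]
  refine ⟨hlen, Finset.eq_of_superset_of_card_ge (fun x hx => ?_) ?_⟩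
  · rw [Finset.mem_Icc] at hx
    obtain ⟨j, hj, rfl⟩ := hσ.exists_substAt_getD_eq hτ hi hin hm hx.1 hx.2
    rw [List.mem_toFinset, blockComp_eq_substAt, hτ.1]
    exact List.getD_mem_of_lt (by rwa [substAt_length hi (hσ.1 ▸ hin), hσ.1, hτ.1])
  · simpa [hlen] using List.toFinset_card_le (blockComp σ i τ)

/-- Standardization intertwines the right composition of packed words with the block
composition of permutations: `st(u ∘→_i v) = B_i(st(u), st(v))`. -/
theorem std_rightComp_eq_blockComp (u v σ τ ρ : List ℕ)
    (hu : IsPacked u) (hv : IsPacked v) (i : ℕ)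
    (hi : i ∈ Finset.Icc 1 u.length) (hv1 : 1 ≤ v.length)
    (hσ : IsStdOf u σ) (hτ : IsStdOf v τ) (hρ : IsStdOf (rightComp u i v) ρ) :
    ρ = blockComp σ i τ := by
  obtain ⟨hi₁, hin⟩ := Finset.mem_Icc.mp hi
  have hui : 1 ≤ u.getD (i - 1) 0 := hu.one_le (List.getD_mem_of_lt (by omega))
  have hσi : 1 ≤ σ.getD (i - 1) 0 := (hσ.1.getD_mem (by omega)).1
  have hvc : ∀ y ∈ v, 1 ≤ y ∧ y ≤ maxLetter v - 1 + 1 := fun y hy => by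
    have := hv.one_le hy
    have := le_maxLetter hy
    omega
  have hτd : ∀ y ∈ τ, 1 ≤ y ∧ y ≤ τ.length - 1 + 1 := fun y hy => by
    have := hτ.1.mem_iff.mp hy
    have := hτ.1.1
    omega
  have hstd : IsStdOf (rightComp u i v) (blockComp σ i τ) := by
    refine ⟨?_, hσ.sameInversions.substAt hτ.sameInversions hσ.1.1 hτ.1.1 hi₁ hin hui hσi
      hvc hτd⟩
    rw [rightComp_eq_substAt, substAt_length hi₁ hin]
    exact isPermWord_blockComp hσ.1 hτ.1 hi₁ hin hv1
  exact hρ.unique hstd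
end

section
/- Let u be a packed word with letter set {1,…,n}, let i ∈ {1,…,n}, and let v be a packed word with letter set {1,…,m}. Then the left composition u ∘←_i v, defined as the word obtained from Inc_{m−1}^{i}(u) by replacing every occurrence of the letter i by the word Inc_{i−1}^{0}(v), is a packed word with letter set {1,…,n+m−1}. -/
lemma IsPackedOn.mem_iff {k : ℕ} {w : List ℕ} (hw : IsPackedOn k w) {a : ℕ} :
    a ∈ w ↔ 1 ≤ a ∧ a ≤ k := by
  rw [← List.mem_toFinset, hw, Finset.mem_Icc]

lemma IsPackedOn.maxLetter_eq {m : ℕ} {v : List ℕ} (hv : IsPackedOn m v) (hm : 1 ≤ m) :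
    maxLetter v = m :=
  le_antisymm (List.max_le_of_forall_le v m fun _ hb => (hv.mem_iff.mp hb).2)
    (List.le_max_of_le (hv.mem_iff.mpr ⟨hm, le_rfl⟩) le_rfl)

lemma IsPackedOn.mem_Inc_zero_iff {m α : ℕ} {v : List ℕ} (hv : IsPackedOn m v) {x : ℕ} :
    x ∈ Inc α 0 v ↔ α < x ∧ x ≤ m + α := by
  simp only [Inc, List.mem_map, hv.mem_iff]
  constructor
  · rintro ⟨b, hb, rfl⟩
    rw [if_pos (by omega)]
    omega
  · intro hx
    exact ⟨x - α, by omega, by rw [if_pos (by omega)]; omega⟩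

lemma mem_leftComp {u v : List ℕ} {i x : ℕ} :
    x ∈ leftComp u i v ↔
      (i ∈ u ∧ x ∈ Inc (i - 1) 0 v) ∨
        ∃ a ∈ u, a ≠ i ∧ x = if i < a then a + (maxLetter v - 1) else a := by
  simp only [leftComp, List.mem_flatMap]
  constructor
  · rintro ⟨a, ha, hx⟩
    by_cases hai : a = i
    · rw [if_pos hai] at hx
      exact Or.inl ⟨hai ▸ ha, hx⟩
    · rw [if_neg hai] at hx
      exact Or.inr ⟨a, ha, hai, List.mem_singleton.mp hx⟩
  · rintro (⟨hi, hx⟩ | ⟨a, ha, hai, rfl⟩)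
    · exact ⟨i, hi, by rwa [if_pos rfl]⟩
    · exact ⟨a, ha, by rw [if_neg hai]; exact List.mem_singleton_self _⟩

/-- The left composition of packed words is a packed word with letter set
`{1, …, n + m - 1}`. -/
theorem leftComp_isPacked (n m i : ℕ) (u v : List ℕ)
    (hu : IsPackedOn n u) (hi : i ∈ Finset.Icc 1 n)
    (hv : IsPackedOn m v) (hm : 1 ≤ m) :
    IsPackedOn (n + m - 1) (leftComp u i v) := by
  rw [Finset.mem_Icc] at hi
  ext x
  simp only [List.mem_toFinset, Finset.mem_Icc, mem_leftComp, hv.mem_Inc_zero_iff,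
    hv.maxLetter_eq hm, hu.mem_iff]
  constructor
  · rintro (⟨-, hx⟩ | ⟨a, ha, -, rfl⟩)
    · omega
    · split_ifs <;> omega
  · intro hx
    -- letters below `i` are kept, letters from `i + m` on come from `a = x - (m - 1)`
    rcases lt_or_ge x i with hxi | hxi
    · exact Or.inr ⟨x, by omega, by omega, by rw [if_neg (by omega)]⟩
    rcases le_or_gt x (m + (i - 1)) with hxm | hxm
    · exact Or.inl ⟨hi, by omega, hxm⟩
    · exact Or.inr ⟨x - (m - 1), by omega, by omega, by rw [if_pos (by omega)]; omega⟩
end
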